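/- Let Δ₁ = {0, v₁, …, v_k} and Δ₂ = {0, u₁, …, u_k} be two k-simplicial sets in (2ℤ)^n containing the origin. There exists a linear MMS preserving transformation T (i.e., T(x) = A x with A ∈ GL_n(ℤ)) with T(Δ₁)* = Δ₂* if the lattices generated by the rows of the matrices [v₁ ⋯ v_k] and [u₁ ⋯ u_k] coincide up to a permutation of coordinates. -/

import Mathlib

/-!
If the row lattices of `M_{Δ₁}` and `M_{Δ₂}` agree (after permuting the columns of the second),
the maps `x ↦ xᵀ M_{Δ₁}` and `x ↦ xᵀ M_{Δ₂}` on `ℤⁿ` have the same image `L`. Each of them splits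
`ℤⁿ` as its kernel times `L` (a submodule of `ℤᵏ`, hence free), and the two kernels are free of the
same rank, so the maps differ by an automorphism of `ℤⁿ`; its transpose `A ∈ GL_n(ℤ)` satisfies
`A v_j = u_{σ j}`. Any `A ∈ GL_n(ℤ)` preserves evenness, midpoints and convex hulls and has an
integral inverse, so it carries mediated sets to mediated sets, `Δ*` onto `(AΔ)*`, and
`conv(Δ) ∩ ℤⁿ` onto `conv(AΔ) ∩ ℤⁿ`.
-/

open Set

/-- Cast an integer lattice point to a real point. -/
def toR {n : ℕ} (p : Fin n → ℤ) : Fin n → ℝ := fun i => (p i : ℝ)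

/-- A lattice point all of whose coordinates are even, i.e., a point of `(2ℤ)^n`. -/
def Even2 {n : ℕ} (p : Fin n → ℤ) : Prop := ∀ i, 2 ∣ p i

/-- The set of midpoints of pairs of distinct even points of `L`. -/
def Mid2 {n : ℕ} (L : Set (Fin n → ℤ)) : Set (Fin n → ℤ) :=
  {m | ∃ s ∈ L, ∃ t ∈ L, Even2 s ∧ Even2 t ∧ s ≠ t ∧ s + t = 2 • m}

/-- `L ⊆ ℤ^n` is `Δ`-mediated if it contains `Δ` and every element of `L`
is a midpoint of two distinct even points of `L` or belongs to `Δ`. -/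
def IsMediated {n : ℕ} (Δ L : Set (Fin n → ℤ)) : Prop :=
  L.Finite ∧ Δ ⊆ L ∧ L ⊆ Mid2 L ∪ Δ

/-- The lattice points of the convex hull `conv(Δ) ∩ ℤ^n`. -/
def convZ {n : ℕ} (Δ : Set (Fin n → ℤ)) : Set (Fin n → ℤ) :=
  {p | toR p ∈ convexHull ℝ (toR '' Δ)}

/-- The maximal `Δ`-mediated set: the union of all `Δ`-mediated sets. -/
def MMS {n : ℕ} (Δ : Set (Fin n → ℤ)) : Set (Fin n → ℤ) := ⋃₀ {L | IsMediated Δ L}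

/-- A `k`-dimensional simplicial set: `k+1` affinely independent even lattice points. -/
def IsSimplicial {n : ℕ} (k : ℕ) (Δ : Set (Fin n → ℤ)) : Prop :=
  (∀ p ∈ Δ, Even2 p) ∧ ∃ f : Fin (k + 1) → (Fin n → ℤ),
    Set.range f = Δ ∧ AffineIndependent ℝ (fun i => toR (f i))

/-- The set of integer points whose real image lies in `T(toR(Δ))`,
i.e., the integral realization of the image `T(Δ)`. -/
def ImgZ {n : ℕ} (T : (Fin n → ℝ) → (Fin n → ℝ)) (Δ : Set (Fin n → ℤ)) :
    Set (Fin n → ℤ) := toR ⁻¹' (T '' (toR '' Δ))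

/-- `T : ℝ^n → ℝ^n` is maximal mediated set preserving. -/
def MMSPreserving {n : ℕ} (T : (Fin n → ℝ) → (Fin n → ℝ)) : Prop :=
  ∀ (k : ℕ) (Δ : Set (Fin n → ℤ)), IsSimplicial k Δ →
    (T '' (toR '' Δ) ⊆ Set.range (toR (n := n)) ∧ IsSimplicial k (ImgZ T Δ)) ∧
    Set.BijOn T (toR '' MMS Δ) (toR '' MMS (ImgZ T Δ)) ∧
    Set.BijOn T (toR '' convZ Δ) (toR '' convZ (ImgZ T Δ))

open Matrix Module

namespace LinearMap

section Ring

variable {R M P : Type*} [Ring R] [AddCommGroup M] [Module R M] [AddCommGroup P] [Module R P]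

theorem exists_linearEquiv_prod_ker_of_surjective [Module.Projective R P]
    (f : M →ₗ[R] P) (hf : Function.Surjective f) :
    ∃ e : M ≃ₗ[R] ker f × P, snd R _ _ ∘ₗ e.toLinearMap = f := by
  obtain ⟨l, hl⟩ := f.exists_rightInverse_of_surjective (range_eq_top.2 hf)
  exact ⟨_, ((exact_subtype_ker_map f).splitSurjectiveEquiv (ker f).injective_subtype
    ⟨l, hl⟩).2.2.symm⟩

end Ring

section PID

variable {R M N : Type*} [CommRing R] [IsDomain R] [IsPrincipalIdealRing R]
  [AddCommGroup M] [Module R M] [Module.Free R M] [Module.Finite R M]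
  [AddCommGroup N] [Module R N] [Module.Free R N]

theorem exists_linearEquiv_comp_eq_of_range_eq (f g : M →ₗ[R] N)
    (h : range f = range g) : ∃ e : M ≃ₗ[R] M, f ∘ₗ e.toLinearMap = g := by
  let g' : M →ₗ[R] range f := g.codRestrict (range f) fun x => h ▸ mem_range_self g x
  have hg' : Function.Surjective g' := by
    rintro ⟨_, hy⟩
    obtain ⟨x, rfl⟩ := h ▸ hy
    exact ⟨x, rfl⟩
  obtain ⟨ef, hef⟩ := exists_linearEquiv_prod_ker_of_surjective _ f.surjective_rangeRestrict
  obtain ⟨eg, heg⟩ := exists_linearEquiv_prod_ker_of_surjective g' hg'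
  have hrank : finrank R (ker g') = finrank R (ker f.rangeRestrict) := by
    have hdim_f := ef.finrank_eq
    have hdim_g := eg.finrank_eq
    rw [finrank_prod] at hdim_f hdim_g
    omega
  refine ⟨eg.trans (((LinearEquiv.ofFinrankEq _ _ hrank).prodCongr (.refl R _)).trans ef.symm), ?_⟩
  have hf_symm : ∀ p, f (ef.symm p) = p.2 := fun p => by
    simpa using congr(($hef (ef.symm p) : N)).symm
  ext x : 1
  simpa [hf_symm, g'] using congr(($heg x : N))

end PID

end LinearMap

theorem Matrix.exists_isUnit_mul_eq_of_span_rows_eq {m k R : Type*} [Fintype m] [DecidableEq m]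
    [Fintype k] [CommRing R] [IsDomain R] [IsPrincipalIdealRing R] (M N : Matrix m k R)
    (h : Submodule.span R (range M) = Submodule.span R (range N)) :
    ∃ A : Matrix m m R, IsUnit A ∧ A * M = N := by
  have hrange : LinearMap.range Mᵀ.mulVecLin = LinearMap.range Nᵀ.mulVecLin := by
    rw [range_mulVecLin, range_mulVecLin]
    exact h
  obtain ⟨e, he⟩ := LinearMap.exists_linearEquiv_comp_eq_of_range_eq _ _ hrange
  refine ⟨(LinearMap.toMatrix' e.toLinearMap)ᵀ, ?_, ?_⟩
  · rw [isUnit_iff_isUnit_det, det_transpose, LinearMap.det_toMatrix']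
    exact e.isUnit_det'
  · have := congrArg LinearMap.toMatrix' he
    rw [← toLin'_apply', ← toLin'_apply', LinearMap.toMatrix'_comp, LinearMap.toMatrix'_toLin',
      LinearMap.toMatrix'_toLin'] at this
    rw [← transpose_transpose M, ← transpose_mul, this, transpose_transpose]

section IntegerPoints

variable {n : ℕ}

theorem toR_injective : Function.Injective (toR (n := n)) := fun _ _ h =>
  funext fun i => by simpa [toR] using congrFun h i

theorem toR_mulVec (A : Matrix (Fin n) (Fin n) ℤ) (p : Fin n → ℤ) :
    toR (A *ᵥ p) = A.map (Int.cast : ℤ → ℝ) *ᵥ toR p :=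
  funext fun i => RingHom.map_mulVec (Int.castRingHom ℝ) A p i

theorem image_toR_image_mulVec (A : Matrix (Fin n) (Fin n) ℤ) (S : Set (Fin n → ℤ)) :
    toR '' ((A *ᵥ ·) '' S) = (A.map (Int.cast : ℤ → ℝ) *ᵥ ·) '' (toR '' S) := by
  simp only [image_image, toR_mulVec]

theorem even2_iff {p : Fin n → ℤ} : Even2 p ↔ ∃ q, p = 2 • q :=
  ⟨fun h => ⟨fun i => (h i).choose, funext fun i => by simpa using (h i).choose_spec⟩,
    fun ⟨q, hq⟩ i => ⟨q i, by simp [hq]⟩⟩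

theorem Even2.map {p : Fin n → ℤ} (hp : Even2 p) (φ : (Fin n → ℤ) →+ (Fin n → ℤ)) :
    Even2 (φ p) := by
  obtain ⟨q, rfl⟩ := even2_iff.1 hp
  exact even2_iff.2 ⟨φ q, map_nsmul φ 2 q⟩

theorem IsMediated.image {Δ L : Set (Fin n → ℤ)} (h : IsMediated Δ L)
    (φ : (Fin n → ℤ) →+ (Fin n → ℤ)) (hφ : Function.Injective φ) :
    IsMediated (φ '' Δ) (φ '' L) := by
  obtain ⟨hfin, hsub, hmid⟩ := h
  refine ⟨hfin.image φ, image_mono hsub, ?_⟩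
  rintro _ ⟨x, hx, rfl⟩
  rcases hmid hx with ⟨s, hs, t, ht, hes, het, hst, hsum⟩ | hxΔ
  · exact Or.inl ⟨φ s, mem_image_of_mem φ hs, φ t, mem_image_of_mem φ ht, hes.map φ, het.map φ,
      hφ.ne hst, by rw [← map_add, hsum, map_nsmul]⟩
  · exact Or.inr (mem_image_of_mem φ hxΔ)

theorem MMS_image (e : (Fin n → ℤ) ≃+ (Fin n → ℤ)) (Δ : Set (Fin n → ℤ)) :
    MMS (e '' Δ) = e '' MMS Δ := by
  ext y
  constructor
  · rintro ⟨L, hL, hy⟩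
    have hL' := hL.image e.symm.toAddMonoidHom e.symm.injective
    simp only [AddEquiv.coe_toAddMonoidHom, image_image, AddEquiv.symm_apply_apply,
      image_id'] at hL'
    exact ⟨e.symm y, ⟨_, hL', mem_image_of_mem _ hy⟩, e.apply_symm_apply y⟩
  · rintro ⟨x, ⟨L, hL, hx⟩, rfl⟩
    exact ⟨_, hL.image e.toAddMonoidHom e.injective, mem_image_of_mem _ hx⟩

section Unimodular

variable {A : Matrix (Fin n) (Fin n) ℤ} (hA : IsUnit A)
include hA

theorem injective_mulVec_map_cast : Function.Injective (A.map (Int.cast : ℤ → ℝ) *ᵥ ·) :=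
  mulVec_injective_of_isUnit (hA.map (Int.castRingHom ℝ).mapMatrix)

theorem MMS_image_mulVec (Δ : Set (Fin n → ℤ)) : MMS ((A *ᵥ ·) '' Δ) = (A *ᵥ ·) '' MMS Δ :=
  MMS_image (A.toLinearEquiv' hA.invertible).toAddEquiv Δ

theorem convZ_image_mulVec (Δ : Set (Fin n → ℤ)) :
    convZ ((A *ᵥ ·) '' Δ) = (A *ᵥ ·) '' convZ Δ := by
  ext p
  obtain ⟨q, rfl⟩ := mulVec_surjective_iff_isUnit.2 hA p
  have hconv : convexHull ℝ ((A.map (Int.cast : ℤ → ℝ) *ᵥ ·) '' (toR '' Δ)) =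
      (A.map (Int.cast : ℤ → ℝ) *ᵥ ·) '' convexHull ℝ (toR '' Δ) :=
    ((A.map (Int.cast : ℤ → ℝ)).mulVecLin.image_convexHull _).symm
  simp only [convZ, mem_ofPred_eq, image_toR_image_mulVec, toR_mulVec, hconv,
    (mulVec_injective_of_isUnit hA).mem_set_image, (injective_mulVec_map_cast hA).mem_set_image]

theorem IsSimplicial.image_mulVec {k : ℕ} {Δ : Set (Fin n → ℤ)} (h : IsSimplicial k Δ) :
    IsSimplicial k ((A *ᵥ ·) '' Δ) := by
  obtain ⟨hev, f, rfl, haff⟩ := h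
  refine ⟨?_, (A *ᵥ ·) ∘ f, range_comp _ _, ?_⟩
  · rintro _ ⟨p, hp, rfl⟩
    exact (hev p hp).map A.mulVecLin.toAddMonoidHom
  · simp only [Function.comp_apply, toR_mulVec]
    exact haff.map' (A.map (Int.cast : ℤ → ℝ)).mulVecLin.toAffineMap (injective_mulVec_map_cast hA)

theorem mmsPreserving_mulVec_of_isUnit :
    MMSPreserving (fun x => (A.map (Int.cast : ℤ → ℝ)).mulVec x) := by
  intro k Δ hΔ
  have hImgZ : ImgZ (fun x => (A.map (Int.cast : ℤ → ℝ)).mulVec x) Δ = (A *ᵥ ·) '' Δ := by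
    rw [ImgZ, ← image_toR_image_mulVec, preimage_image_eq _ toR_injective]
  rw [hImgZ, MMS_image_mulVec hA, convZ_image_mulVec hA, image_toR_image_mulVec,
    image_toR_image_mulVec, ← image_toR_image_mulVec]
  exact ⟨⟨image_subset_range _ _, hΔ.image_mulVec hA⟩,
    (injective_mulVec_map_cast hA).injOn.bijOn_image,
    (injective_mulVec_map_cast hA).injOn.bijOn_image⟩

end Unimodular

end IntegerPoints

theorem mms_invariant_of_lattice_general {n k : ℕ} (v u : Fin k → (Fin n → ℤ))
    (hlat : ∃ σ : Equiv.Perm (Fin k),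
      Submodule.span ℤ (Set.range fun i : Fin n => fun j => v j i) =
        Submodule.map (LinearMap.funLeft ℤ ℤ σ)
          (Submodule.span ℤ (Set.range fun i : Fin n => fun j => u j i))) :
    ∃ A : Matrix (Fin n) (Fin n) ℤ, (A.det = 1 ∨ A.det = -1) ∧
      MMSPreserving (fun x => (A.map (Int.cast : ℤ → ℝ)).mulVec x) ∧
      MMS ((fun p => A.mulVec p) '' (insert (0 : Fin n → ℤ) (Set.range v))) =
        MMS (insert (0 : Fin n → ℤ) (Set.range u)) := by
  obtain ⟨σ, hσ⟩ := hlat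
  obtain ⟨A, hA, hAvu⟩ := exists_isUnit_mul_eq_of_span_rows_eq (of fun i j => v j i)
    (of fun i j => u (σ j) i) (hσ.trans (by rw [Submodule.map_span, ← range_comp]; rfl))
  have hcol : (A *ᵥ ·) ∘ v = u ∘ σ := funext fun j => funext fun i => by
    simpa [mul_apply, mulVec, dotProduct] using congr($hAvu i j)
  refine ⟨A, Int.isUnit_iff.1 ((isUnit_iff_isUnit_det A).1 hA),
    mmsPreserving_mulVec_of_isUnit hA, ?_⟩
  rw [image_insert_eq, mulVec_zero, ← range_comp, hcol, σ.surjective.range_comp]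

/-- Let `Δ₁ = {0, v₁, …, v_k}` and `Δ₂ = {0, u₁, …, u_k}` be `k`-simplicial sets in
`(2ℤ)^n`. If the lattices generated by the rows of `[v₁ ⋯ v_k]` and `[u₁ ⋯ u_k]`
coincide up to a permutation of coordinates, then there is a linear MMS preserving
map `T(x) = Ax` with `A ∈ GL_n(ℤ)` such that `T(Δ₁)* = Δ₂*`. -/
theorem mms_invariant_of_lattice {n k : ℕ} (v u : Fin k → (Fin n → ℤ))
    (hv : ∀ j, Even2 (v j)) (hu : ∀ j, Even2 (u j))
    (hΔ₁ : AffineIndependent ℝ (fun i : Fin (k + 1) => toR ((Fin.cons 0 v : Fin (k + 1) → Fin n → ℤ) i)))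
    (hΔ₂ : AffineIndependent ℝ (fun i : Fin (k + 1) => toR ((Fin.cons 0 u : Fin (k + 1) → Fin n → ℤ) i)))
    (hlat : ∃ σ : Equiv.Perm (Fin k),
      Submodule.span ℤ (Set.range fun i : Fin n => fun j => v j i) =
        Submodule.map (LinearMap.funLeft ℤ ℤ σ)
          (Submodule.span ℤ (Set.range fun i : Fin n => fun j => u j i))) :
    ∃ A : Matrix (Fin n) (Fin n) ℤ, (A.det = 1 ∨ A.det = -1) ∧
      MMSPreserving (fun x => (A.map (Int.cast : ℤ → ℝ)).mulVec x) ∧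
      MMS ((fun p => A.mulVec p) '' (insert (0 : Fin n → ℤ) (Set.range v))) =
        MMS (insert (0 : Fin n → ℤ) (Set.range u)) :=
  mms_invariant_of_lattice_general v u hlat
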